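/- For all natural numbers n and m ≤ n, the polynomial identity (1 - x)^m * (1 + x)^(n - m) = Σ_{k=0}^{n} C(n, k, m) * x^k holds in ℤ[x]. -/

import Mathlib

/-!
By the binomial theorem `(1 - X)^m = ∑ (-1)^l binom(m, l) X^l`, and the coefficient of `X^k` in
`X^l (1 + X)^(n-m)` is `binom(n-m, k-l)` for `l ≤ k` and `0` otherwise: this is the guarded term
of `kravC`, so `kravC n k m` is the `k`-th coefficient of `(1 - X)^m (1 + X)^(n-m)`, a polynomial
of degree at most `n`.
-/

open Finset

/-- Generalized binomial (Kravchuk) coefficient: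
`C(n,k,m) = Σ_{l=0}^{m} (-1)^l * binom(n-m, k-l) * binom(m, l)`,
with the convention that the binomial vanishes for a negative lower index
(encoded by the `if l ≤ k` guard, since we use natural subtraction). -/
def kravC (n k m : ℕ) : ℤ :=
  ∑ l ∈ Finset.range (m + 1),
    (-1 : ℤ) ^ l * (if l ≤ k then ((n - m).choose (k - l) : ℤ) else 0) * (m.choose l : ℤ)

namespace Polynomial

theorem one_sub_X_pow_eq_sum {R : Type*} [CommRing R] (m : ℕ) :
    (1 - X : R[X]) ^ m = ∑ l ∈ range (m + 1), C ((-1) ^ l * (m.choose l : R)) * X ^ l := by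
  rw [sub_eq_neg_add, add_pow]
  refine sum_congr rfl fun l _ => ?_
  rw [one_pow, mul_one, neg_pow, C_mul, C_pow, C_neg, C_1, map_natCast]
  ring

end Polynomial

open Polynomial in
theorem kravC_eq_coeff (n k m : ℕ) :
    kravC n k m = ((1 - X : ℤ[X]) ^ m * (1 + X) ^ (n - m)).coeff k := by
  simp only [one_sub_X_pow_eq_sum, sum_mul, finsetSum_coeff, mul_assoc, coeff_C_mul,
    coeff_X_pow_mul', coeff_one_add_X_pow, kravC]
  refine sum_congr rfl fun l _ => ?_
  ring

open Polynomial in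
theorem kravC_generating_polynomial (n m : ℕ) (hm : m ≤ n) :
    (1 - X : ℤ[X]) ^ m * (1 + X) ^ (n - m) =
      ∑ k ∈ Finset.range (n + 1), Polynomial.C (kravC n k m) * X ^ k := by
  simp_rw [kravC_eq_coeff, C_mul_X_pow_eq_monomial]
  refine as_sum_range' _ _ (Nat.lt_succ_of_le ?_)
  compute_degree
  omega
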